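/- Let (c_q)_{q≥0} be an absolutely summable real sequence, n ≥ 1, x_k = π(2k−1)/(2n), φ_0(x) = 1/√π and φ_q(x) = √(2/π)cos(qx) for q ≥ 1, and define u(x) = ∑_{q=0}^{∞} c_q φ_q(x). Then for each integer p with 1 ≤ p ≤ n−1: (π/n)∑_{k=1}^{n} u(x_k) φ_p(x_k) = c_p + ∑_{l=1}^{∞} (−1)^l (c_{p+2ln} + c_{2ln−p}). -/

import Mathlib

/-!
Multiplying by `2 sin θ` telescopes `∑_{k=1}^n cos ((2k - 1) θ)` to `sin (2nθ)`; with
`θ = mπ/(2n)` this shows that `∑_k cos (m x_k)` vanishes unless `2n ∣ m`, where every term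
equals `(-1)^(m/2n)`. Since `φ_q φ_p` is a combination of `cos ((q - p) x)` and
`cos ((q + p) x)`, the discrete inner product of `φ_q` and `φ_p` is `χ(q - p) + χ(q + p)` with
`χ(m) = (-1)^(m/2n) [2n ∣ m]` (`aliasSign`; for `q = 0` both sides vanish because
`0 < p < 2n`). Summing against the absolutely summable `c_q`, the first term picks out
`q = p + 2ln` (`l ≥ 0`) and the second `q = 2ln - p` (`l ≥ 1`).
-/

open Finset Real

theorem two_mul_sin_mul_sum_cos_odd_mul (θ : ℝ) (n : ℕ) :
    2 * sin θ * ∑ k ∈ Icc 1 n, cos ((2 * k - 1) * θ) = sin (2 * n * θ) := by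
  induction n with
  | zero => simp
  | succ m ih =>
    rw [sum_Icc_succ_top (by omega), mul_add, ih, two_mul_sin_mul_cos]
    push_cast
    rw [show θ - (2 * (m + 1) - 1) * θ = -(2 * m * θ) by ring, sin_neg]
    ring_nf

noncomputable def aliasSign (n : ℕ) (m : ℤ) : ℝ :=
  if (2 * n : ℤ) ∣ m then (-1) ^ (m / (2 * n)) else 0

lemma aliasSign_two_mul_mul {n : ℕ} (hn : n ≠ 0) (j : ℤ) :
    aliasSign n (2 * j * n) = (-1) ^ j := by
  rw [aliasSign, mul_right_comm, if_pos (dvd_mul_right _ _),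
    Int.mul_ediv_cancel_left _ (by positivity)]

lemma aliasSign_of_not_dvd {n : ℕ} {m : ℤ} (h : ¬ (2 * n : ℤ) ∣ m) : aliasSign n m = 0 :=
  if_neg h

lemma abs_aliasSign_le_one (n : ℕ) (m : ℤ) : |aliasSign n m| ≤ 1 := by
  unfold aliasSign
  split_ifs <;> simp

noncomputable def midpointNode (n k : ℕ) : ℝ := π * (2 * (k : ℝ) - 1) / (2 * n)

theorem sum_cos_mul_midpointNode (n : ℕ) (m : ℤ) :
    ∑ k ∈ Icc 1 n, cos (m * midpointNode n k) = n * aliasSign n m := by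
  rcases eq_or_ne n 0 with rfl | hn
  · simp
  set θ : ℝ := m * π / (2 * n)
  have hθ : ∀ k : ℕ, m * midpointNode n k = (2 * k - 1) * θ := fun k => by
    simp only [midpointNode, θ]; field_simp
  simp_rw [hθ]
  by_cases hdvd : (2 * n : ℤ) ∣ m
  · obtain ⟨j, rfl⟩ := hdvd
    rw [mul_right_comm]
    have hterm : ∀ k ∈ Icc 1 n, cos ((2 * k - 1) * θ) = (-1) ^ j := fun k _ => by
      have : (2 * k - 1) * θ = ((2 * k - 1) * j : ℤ) * π := by
        simp only [θ]; push_cast; field_simp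
      have hodd : Odd (2 * (k : ℤ) - 1) := ⟨k - 1, by ring⟩
      rw [this, cos_int_mul_pi, zpow_mul, hodd.neg_one_zpow]
    rw [sum_congr rfl hterm, sum_const, Nat.card_Icc, aliasSign_two_mul_mul hn, nsmul_eq_mul]
    simp
  · have hsin : sin θ ≠ 0 := by
      rw [Ne, sin_eq_zero_iff]
      rintro ⟨j, hj⟩
      apply hdvd
      refine ⟨j, ?_⟩
      simp only [θ] at hj
      field_simp at hj
      exact_mod_cast (show (m : ℝ) = 2 * n * j by linarith)
    have h := two_mul_sin_mul_sum_cos_odd_mul θ n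
    rw [show 2 * n * θ = m * π by simp only [θ]; field_simp, sin_int_mul_pi] at h
    rw [aliasSign_of_not_dvd hdvd, mul_zero]
    simpa [hsin] using h

noncomputable def cosBasis (q : ℕ) (x : ℝ) : ℝ :=
  if q = 0 then 1 / √π else √(2 / π) * cos (q * x)

lemma abs_cosBasis_le_one (q : ℕ) (x : ℝ) : |cosBasis q x| ≤ 1 := by
  unfold cosBasis
  split_ifs
  · rw [abs_of_nonneg (by positivity), div_le_one (by positivity), one_le_sqrt]
    linarith [pi_gt_three]
  · rw [abs_mul, abs_of_nonneg (sqrt_nonneg _)]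
    refine mul_le_one₀ ?_ (abs_nonneg _) (abs_cos_le_one _)
    exact sqrt_le_one.mpr <| (div_le_one pi_pos).mpr (by linarith [pi_gt_three])

theorem mul_sum_cosBasis_mul_cosBasis_midpointNode {n p : ℕ} (hp : 0 < p) (hpn : p < 2 * n)
    (q : ℕ) :
    π / n * ∑ k ∈ Icc 1 n, cosBasis q (midpointNode n k) * cosBasis p (midpointNode n k)
      = aliasSign n (q - p) + aliasSign n (q + p) := by
  have hn : (n : ℝ) ≠ 0 := by norm_cast; omega
  have hsum := sum_cos_mul_midpointNode n
  rcases eq_or_ne q 0 with rfl | hq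
  · have hndvd : ¬ (2 * n : ℤ) ∣ p := fun h => by
      have := Nat.le_of_dvd hp (by exact_mod_cast h)
      omega
    have hcos := hsum p
    push_cast at hcos
    simp only [cosBasis, if_pos, if_neg hp.ne', ← mul_sum, hcos, Nat.cast_zero, zero_sub,
      zero_add, aliasSign_of_not_dvd hndvd, aliasSign_of_not_dvd (mt dvd_neg.mp hndvd)]
    ring
  · have hprod : ∀ x, cosBasis q x * cosBasis p x
        = (cos (((q - p : ℤ) : ℝ) * x) + cos (((q + p : ℤ) : ℝ) * x)) / π := fun x => by
      simp only [cosBasis, if_neg hq, if_neg hp.ne']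
      push_cast
      rw [sub_mul, add_mul, ← two_mul_cos_mul_cos, mul_mul_mul_comm,
        mul_self_sqrt (by positivity)]
      ring
    simp only [hprod, ← sum_div, sum_add_distrib, hsum]
    field_simp

theorem hasSum_mul_aliasSign_sub_iff {n p : ℕ} (hpn : p < 2 * n) (f : ℕ → ℝ) {a : ℝ} :
    HasSum (fun q => f q * aliasSign n (q - p)) a ↔
      HasSum (fun j => (-1) ^ j * f (p + 2 * j * n)) a := by
  have hn : n ≠ 0 := by omega
  have hinj : Function.Injective fun j => p + 2 * j * n := fun i j h => by
    simpa [hn] using h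
  rw [← hinj.hasSum_iff]
  · congr! 2 with j
    simp only [Function.comp_apply]
    push_cast
    rw [add_sub_cancel_left, aliasSign_two_mul_mul hn, zpow_natCast, mul_comm]
  · intro q hq
    rw [aliasSign_of_not_dvd, mul_zero]
    rintro ⟨t, ht⟩
    have ht0 : 0 ≤ t := by
      by_contra! h
      nlinarith
    refine hq ⟨t.toNat, ?_⟩
    zify
    rw [Int.toNat_of_nonneg ht0]
    linarith

theorem hasSum_mul_aliasSign_add_iff {n p : ℕ} (hp : 0 < p) (hpn : p ≤ 2 * n) (f : ℕ → ℝ)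
    {a : ℝ} :
    HasSum (fun q => f q * aliasSign n (q + p)) a ↔
      HasSum (fun l => (-1) ^ (l + 1) * f (2 * (l + 1) * n - p)) a := by
  have hn : n ≠ 0 := by omega
  have hle : ∀ l : ℕ, p ≤ 2 * (l + 1) * n := fun l => hpn.trans (by nlinarith)
  have hinj : Function.Injective fun l => 2 * (l + 1) * n - p := fun i j h => by
    simp only at h
    have := hle i
    have := hle j
    have : 2 * (i + 1) * n = 2 * (j + 1) * n := by omega
    simpa [hn] using this
  rw [← hinj.hasSum_iff]
  · congr! 2 with l
    simp only [Function.comp_apply]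
    push_cast [hle l]
    rw [sub_add_cancel, ← Nat.cast_add_one, aliasSign_two_mul_mul hn, zpow_natCast, mul_comm]
  · intro q hq
    rw [aliasSign_of_not_dvd, mul_zero]
    rintro ⟨t, ht⟩
    have ht1 : 1 ≤ t := by
      by_contra! h
      nlinarith
    refine hq ⟨(t - 1).toNat, ?_⟩
    zify [hle]
    rw [Int.toNat_of_nonneg (by omega)]
    linarith

lemma summable_mul_of_abs_le_one {c g : ℕ → ℝ} (hc : Summable fun q => |c q|)
    (hg : ∀ q, |g q| ≤ 1) : Summable fun q => c q * g q :=
  .of_norm_bounded hc fun q => by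
    simpa [abs_mul] using mul_le_of_le_one_right (abs_nonneg _) (hg q)

theorem hasSum_mul_sum_cosSeries_midpointNode {c : ℕ → ℝ} (hc : Summable fun q => |c q|)
    {n p : ℕ} (hp : 0 < p) (hpn : p < 2 * n) :
    HasSum (fun q => c q * aliasSign n (q - p) + c q * aliasSign n (q + p))
      (π / n * ∑ k ∈ Icc 1 n,
        (∑' q, c q * cosBasis q (midpointNode n k)) * cosBasis p (midpointNode n k)) := by
  have hcoeff (q : ℕ) : c q * aliasSign n (q - p) + c q * aliasSign n (q + p) =
      π / n * ∑ k ∈ Icc 1 n,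
        c q * cosBasis q (midpointNode n k) * cosBasis p (midpointNode n k) := by
    rw [← mul_add, ← mul_sum_cosBasis_mul_cosBasis_midpointNode hp hpn q, mul_left_comm,
      mul_sum]
    simp only [mul_assoc]
  simp only [hcoeff]
  refine (hasSum_sum fun k _ => HasSum.mul_right _ ?_).mul_left _
  exact (summable_mul_of_abs_le_one hc fun q => abs_cosBasis_le_one q _).hasSum

theorem discrete_fourier_aliasing_general (c : ℕ → ℝ) (hc : Summable fun q => |c q|)
    (n p : ℕ) (hp1 : 1 ≤ p) (hp2 : p ≤ n - 1)
    (φ : ℕ → ℝ → ℝ)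
    (hφ0 : ∀ x, φ 0 x = 1 / Real.sqrt Real.pi)
    (hφ : ∀ q : ℕ, 1 ≤ q → ∀ x, φ q x = Real.sqrt (2 / Real.pi) * Real.cos (q * x))
    (u : ℝ → ℝ) (hu : ∀ x, u x = ∑' q : ℕ, c q * φ q x) :
    (Real.pi / n) * ∑ k ∈ Finset.Icc 1 n,
        u (Real.pi * (2 * (k : ℝ) - 1) / (2 * n)) * φ p (Real.pi * (2 * (k : ℝ) - 1) / (2 * n))
      = c p + ∑' l : ℕ, (-1 : ℝ) ^ (l + 1) * (c (p + 2 * (l + 1) * n) + c (2 * (l + 1) * n - p)) := by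
  have hφ_eq : φ = cosBasis := by
    ext q x
    rcases eq_or_ne q 0 with rfl | hq
    · simp [cosBasis, hφ0]
    · simp [cosBasis, hq, hφ q (Nat.one_le_iff_ne_zero.mpr hq)]
  subst hφ_eq
  obtain rfl : u = fun x => ∑' q, c q * cosBasis q x := funext hu
  have hlhs := hasSum_mul_sum_cosSeries_midpointNode hc hp1 (n := n) (by omega)
  obtain ⟨a, ha⟩ := summable_mul_of_abs_le_one hc fun q => abs_aliasSign_le_one n (q - p)
  obtain ⟨b, hb⟩ := summable_mul_of_abs_le_one hc fun q => abs_aliasSign_le_one n (q + p)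
  have hA := (hasSum_nat_add_iff' 1).mpr ((hasSum_mul_aliasSign_sub_iff (by omega) c).mp ha)
  have hB := (hasSum_mul_aliasSign_add_iff hp1 (by omega) c).mp hb
  have hrhs : HasSum
      (fun l => (-1 : ℝ) ^ (l + 1) * (c (p + 2 * (l + 1) * n) + c (2 * (l + 1) * n - p)))
      (a - c p + b) := by
    simpa [mul_add] using hA.add hB
  exact (hlhs.unique (ha.add hb)).trans (by rw [hrhs.tsum_eq]; ring)

/-- Discrete Fourier coefficient = true coefficient + aliasing series. -/
theorem discrete_fourier_aliasing (c : ℕ → ℝ) (hc : Summable fun q => |c q|)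
    (n p : ℕ) (hn : 1 ≤ n) (hp1 : 1 ≤ p) (hp2 : p ≤ n - 1)
    (φ : ℕ → ℝ → ℝ)
    (hφ0 : ∀ x, φ 0 x = 1 / Real.sqrt Real.pi)
    (hφ : ∀ q : ℕ, 1 ≤ q → ∀ x, φ q x = Real.sqrt (2 / Real.pi) * Real.cos (q * x))
    (u : ℝ → ℝ) (hu : ∀ x, u x = ∑' q : ℕ, c q * φ q x) :
    (Real.pi / n) * ∑ k ∈ Finset.Icc 1 n,
        u (Real.pi * (2 * (k : ℝ) - 1) / (2 * n)) * φ p (Real.pi * (2 * (k : ℝ) - 1) / (2 * n))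
      = c p + ∑' l : ℕ, (-1 : ℝ) ^ (l + 1) * (c (p + 2 * (l + 1) * n) + c (2 * (l + 1) * n - p)) :=
  discrete_fourier_aliasing_general c hc n p hp1 hp2 φ hφ0 hφ u hu
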